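/- Let G = (V, E) be a finite simple graph and e ∈ E. Then γst(G) ≤ γst(G_e) ≤ γst(G) + 1, where G_e denotes the graph obtained from G by subdividing the edge e. -/

import Mathlib

open SimpleGraph

/-- The degree of a vertex, as the cardinality of its neighbor set. -/
noncomputable def sdeg {V : Type*} (G : SimpleGraph V) (v : V) : ℕ :=
  (G.neighborSet v).ncard

/-- `D` is a strong dominating set of `G` if every vertex outside `D` has a neighbor
in `D` of at least the same degree. -/
def IsStrongDominatingSet {V : Type*} (G : SimpleGraph V) (D : Set V) : Prop :=
  ∀ x ∉ D, ∃ y ∈ D, G.Adj x y ∧ sdeg G x ≤ sdeg G y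

/-- The strong domination number: minimum cardinality of a strong dominating set. -/
noncomputable def strongDominationNumber {V : Type*} (G : SimpleGraph V) : ℕ :=
  sInf {n | ∃ D : Set V, IsStrongDominatingSet G D ∧ D.ncard = n}

/-- Subdivision of the edge `uv` of `G`: delete `uv`, add a new vertex `none`
adjacent to `u` and `v`. -/
def subdivide {V : Type*} (G : SimpleGraph V) (u v : V) : SimpleGraph (Option V) :=
  SimpleGraph.fromRel (fun a b =>
    match a, b with
    | some x, some y => G.Adj x y ∧ ¬(s(x, y) = s(u, v))
    | some x, none => x = u ∨ x = v
    | none, some _ => False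
    | none, none => False)

/-- Contraction of the edge `uv` of `G`: the vertex `u` plays the role of the merged
vertex, and `v` is removed. -/
def contractEdge {V : Type*} (G : SimpleGraph V) (u v : V) :
    SimpleGraph {x : V // x ≠ v} :=
  SimpleGraph.fromRel (fun a b =>
    G.Adj a.1 b.1 ∨ (a.1 = u ∧ G.Adj v b.1) ∨ (b.1 = u ∧ G.Adj a.1 v))

/-- The corona product `G1 ∘ G2`: one copy of `G1` together with one copy of `G2`
for each vertex `i` of `G1`, where `i` is joined to all vertices of its copy. -/
def corona {V1 V2 : Type*} (G1 : SimpleGraph V1) (G2 : SimpleGraph V2) :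
    SimpleGraph (V1 ⊕ V1 × V2) :=
  SimpleGraph.fromRel (fun a b =>
    match a, b with
    | .inl a, .inl b => G1.Adj a b
    | .inl a, .inr (i, _) => a = i
    | .inr _, .inl _ => False
    | .inr (i, x), .inr (j, y) => i = j ∧ G2.Adj x y)

/-- The `k`-subdivision `G^{1/k}` of `G`: every edge is replaced by a path of length
`k`, the internal vertices of the path replacing `e` being indexed by `e` and a
position in `Fin (k-1)` (an orientation of `e` is chosen via `Quot.out`). -/
noncomputable def kSubdivision {V : Type*} (G : SimpleGraph V) (k : ℕ) :
    SimpleGraph (V ⊕ G.edgeSet × Fin (k - 1)) :=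
  SimpleGraph.fromRel (fun a b =>
    match a, b with
    | .inl x, .inl y => k ≤ 1 ∧ G.Adj x y
    | .inl x, .inr (e, i) =>
        (x = (Quot.out (e : Sym2 V)).1 ∧ (i : ℕ) = 0) ∨
        (x = (Quot.out (e : Sym2 V)).2 ∧ (i : ℕ) = k - 2)
    | .inr _, .inl _ => False
    | .inr (e, i), .inr (f, j) => e = f ∧ (j : ℕ) = (i : ℕ) + 1)

/-!
Subdividing `uv` leaves the degrees of the old vertices unchanged and gives the new vertex `w`
degree 2. A strong dominating set of `G_e` becomes one of `G` by replacing `w` with an endpoint of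
`uv` of larger degree. Conversely, a strong dominating set `D` of `G` still dominates every old
vertex of `G_e`, except possibly an endpoint, say `u`, whose only dominator is `v ∈ D`; then
`deg u ≤ deg v`, and adding `u` (if `deg v ≥ 2`, so that `v` dominates `w`) or else `w` (which then
dominates `u`, of degree at most 1) gives a strong dominating set of `G_e`.
-/

section StrongDomination

variable {V V' : Type*} {G : SimpleGraph V} {D : Set V} {x : V}

def StrongDominates (G : SimpleGraph V) (D : Set V) (x : V) : Prop :=
  x ∈ D ∨ ∃ y ∈ D, G.Adj x y ∧ sdeg G x ≤ sdeg G y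

theorem isStrongDominatingSet_iff_forall_strongDominates :
    IsStrongDominatingSet G D ↔ ∀ x, StrongDominates G D x :=
  forall_congr' fun _ => or_iff_not_imp_left.symm

theorem StrongDominates.mono {D' : Set V} (h : StrongDominates G D x) (hDD' : D ⊆ D') :
    StrongDominates G D' x :=
  h.imp (@hDD' x) fun ⟨y, hy, hxy, hdeg⟩ => ⟨y, hDD' hy, hxy, hdeg⟩

theorem strongDominationNumber_le_ncard (hD : IsStrongDominatingSet G D) :
    strongDominationNumber G ≤ D.ncard :=
  Nat.sInf_le ⟨D, hD, rfl⟩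

theorem exists_isStrongDominatingSet_ncard_eq (G : SimpleGraph V) :
    ∃ D, IsStrongDominatingSet G D ∧ D.ncard = strongDominationNumber G :=
  Nat.sInf_mem (s := {n | ∃ D, IsStrongDominatingSet G D ∧ D.ncard = n})
    ⟨_, Set.univ, fun x hx => absurd (Set.mem_univ x) hx, rfl⟩

theorem strongDominationNumber_le_add_of_forall_exists {G' : SimpleGraph V'} {k : ℕ}
    (h : ∀ D', IsStrongDominatingSet G' D' →
      ∃ D, IsStrongDominatingSet G D ∧ D.ncard ≤ D'.ncard + k) :
    strongDominationNumber G ≤ strongDominationNumber G' + k := by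
  obtain ⟨D', hD', hcard⟩ := exists_isStrongDominatingSet_ncard_eq G'
  obtain ⟨D, hD, hle⟩ := h D' hD'
  calc strongDominationNumber G ≤ D.ncard := strongDominationNumber_le_ncard hD
    _ ≤ D'.ncard + k := hle
    _ = strongDominationNumber G' + k := by rw [hcard]

end StrongDomination

section Subdivide

variable {V : Type*} (G : SimpleGraph V) {u v : V}

theorem subdivide_adj_some_some {a b : V} :
    (subdivide G u v).Adj (some a) (some b) ↔ G.Adj a b ∧ s(a, b) ≠ s(u, v) := by
  simp only [subdivide, fromRel_adj, ne_eq, Option.some.injEq]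
  constructor
  · rintro ⟨-, h | ⟨hba, h⟩⟩
    · exact h
    · exact ⟨hba.symm, by rwa [Sym2.eq_swap]⟩
  · rintro ⟨hab, h⟩
    exact ⟨hab.ne, Or.inl ⟨hab, h⟩⟩

theorem subdivide_adj_some_none {a : V} :
    (subdivide G u v).Adj (some a) none ↔ a = u ∨ a = v := by
  simp [subdivide]

theorem subdivide_adj_none_some {a : V} :
    (subdivide G u v).Adj none (some a) ↔ a = u ∨ a = v := by
  rw [adj_comm, subdivide_adj_some_none]

theorem subdivide_comm : subdivide G u v = subdivide G v u := by
  ext a b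
  cases a <;> cases b <;>
    simp only [subdivide, fromRel_adj, Sym2.eq_swap (a := u) (b := v)] <;> tauto

theorem sdeg_subdivide_none (huv : u ≠ v) : sdeg (subdivide G u v) none = 2 := by
  have : (subdivide G u v).neighborSet none = {some u, some v} := by
    ext (_ | a)
    · simp
    · simp [subdivide_adj_none_some]
  rw [sdeg, this, Set.ncard_pair (by simpa using huv)]

open Classical in
/-- Every edge `xb` of `G` survives in the subdivision, except `uv`, which becomes the edge from
`x` to the new vertex. -/
theorem neighborSet_subdivide_some (huv : G.Adj u v) (x : V) :
    (subdivide G u v).neighborSet (some x) =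
      (fun b => if s(x, b) = s(u, v) then none else some b) '' G.neighborSet x := by
  ext (_ | c)
  · simp only [mem_neighborSet, subdivide_adj_some_none, Set.mem_image, ite_eq_left_iff,
      reduceCtorEq, imp_false, not_not]
    constructor
    · rintro (rfl | rfl)
      exacts [⟨v, huv, rfl⟩, ⟨u, huv.symm, Sym2.eq_swap⟩]
    · rintro ⟨b, -, hxb⟩
      exact Sym2.mem_iff.1 (hxb ▸ Sym2.mem_mk_left x b)
  · simp only [mem_neighborSet, subdivide_adj_some_some, Set.mem_image]
    constructor
    · rintro ⟨hxc, hne⟩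
      exact ⟨c, hxc, if_neg hne⟩
    · rintro ⟨b, hxb, hb⟩
      split_ifs at hb with hne
      cases hb
      exact ⟨hxb, hne⟩

theorem sdeg_subdivide_some (huv : G.Adj u v) (x : V) :
    sdeg (subdivide G u v) (some x) = sdeg G x := by
  rw [sdeg, neighborSet_subdivide_some G huv, Set.ncard_image_of_injective, sdeg]
  intro b c hbc
  dsimp only at hbc
  split_ifs at hbc with hb hc
  · exact Sym2.congr_right.1 (hb.trans hc.symm)
  · exact Option.some_injective _ hbc

theorem exists_isStrongDominatingSet_of_subdivide [Finite V] (huv : G.Adj u v)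
    {D' : Set (Option V)} (hD' : IsStrongDominatingSet (subdivide G u v) D') :
    ∃ D, IsStrongDominatingSet G D ∧ D.ncard ≤ D'.ncard := by
  obtain ⟨z, hz⟩ : ∃ z, ∀ x, x = u ∨ x = v → x ≠ z → G.Adj x z ∧ sdeg G x ≤ sdeg G z := by
    rcases le_total (sdeg G v) (sdeg G u) with h | h
    · refine ⟨u, ?_⟩
      rintro x (rfl | rfl) hxz
      exacts [absurd rfl hxz, ⟨huv.symm, h⟩]
    · refine ⟨v, ?_⟩
      rintro x (rfl | rfl) hxz
      exacts [⟨huv, h⟩, absurd rfl hxz]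
  refine ⟨(fun o => o.elim z id) '' D', fun x hx => ?_, Set.ncard_image_le⟩
  obtain ⟨_ | b, hyD', hxy, hdeg⟩ := hD' (some x) fun h => hx ⟨some x, h, rfl⟩
  · exact ⟨z, ⟨none, hyD', rfl⟩,
      hz x ((subdivide_adj_some_none G).1 hxy) fun h => hx ⟨none, hyD', h.symm⟩⟩
  · rw [sdeg_subdivide_some G huv, sdeg_subdivide_some G huv] at hdeg
    exact ⟨b, ⟨some b, hyD', rfl⟩, ((subdivide_adj_some_some G).1 hxy).1, hdeg⟩

variable {G} {D : Set V}

theorem strongDominates_subdivide_some (huv : G.Adj u v) {x y : V} (hy : y ∈ D)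
    (hxy : G.Adj x y) (hne : s(x, y) ≠ s(u, v)) (hdeg : sdeg G x ≤ sdeg G y) :
    StrongDominates (subdivide G u v) (some '' D) (some x) :=
  Or.inr ⟨some y, ⟨y, hy, rfl⟩, (subdivide_adj_some_some G).2 ⟨hxy, hne⟩,
    by rwa [sdeg_subdivide_some G huv, sdeg_subdivide_some G huv]⟩

theorem isStrongDominatingSet_subdivide_of_superset (huv : G.Adj u v)
    (hD : IsStrongDominatingSet G D) {D' : Set (Option V)} (hDD' : some '' D ⊆ D')
    (hw : StrongDominates (subdivide G u v) D' none)
    (hu : StrongDominates (subdivide G u v) D' (some u))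
    (hv : StrongDominates (subdivide G u v) D' (some v)) :
    IsStrongDominatingSet (subdivide G u v) D' := by
  rw [isStrongDominatingSet_iff_forall_strongDominates]
  rintro (_ | x)
  · exact hw
  by_cases hx : x = u ∨ x = v
  · rcases hx with rfl | rfl
    exacts [hu, hv]
  refine (?_ : StrongDominates _ (some '' D) (some x)).mono hDD'
  rcases isStrongDominatingSet_iff_forall_strongDominates.1 hD x with hxD | ⟨y, hy, hxy, hdeg⟩
  · exact Or.inl ⟨x, hxD, rfl⟩
  · exact strongDominates_subdivide_some huv hy hxy
      (fun h => hx (Sym2.mem_iff.1 (h ▸ Sym2.mem_mk_left x y))) hdeg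

theorem mem_and_sdeg_le_of_not_strongDominates_subdivide (huv : G.Adj u v)
    (hD : IsStrongDominatingSet G D)
    (hu : ¬StrongDominates (subdivide G u v) (some '' D) (some u)) :
    v ∈ D ∧ sdeg G u ≤ sdeg G v := by
  obtain ⟨y, hy, huy, hdeg⟩ := hD u fun h => hu (Or.inl ⟨u, h, rfl⟩)
  obtain rfl : y = v := by
    by_contra hyv
    exact hu (strongDominates_subdivide_some huv hy huy (Sym2.congr_right.not.2 hyv) hdeg)
  exact ⟨hy, hdeg⟩

theorem exists_insert_isStrongDominatingSet_subdivide_of_not_strongDominates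
    (huv : G.Adj u v) (hD : IsStrongDominatingSet G D)
    (hu : ¬StrongDominates (subdivide G u v) (some '' D) (some u)) :
    ∃ w, IsStrongDominatingSet (subdivide G u v) (insert w (some '' D)) := by
  obtain ⟨hvD, hdeg⟩ := mem_and_sdeg_le_of_not_strongDominates_subdivide huv hD hu
  have hv_mem : ∀ w, some v ∈ insert w (some '' D) :=
    fun w => Set.mem_insert_of_mem w ⟨v, hvD, rfl⟩
  by_cases hv2 : 2 ≤ sdeg G v
  · refine ⟨some u, isStrongDominatingSet_subdivide_of_superset huv hD (Set.subset_insert _ _)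
      ?_ (Or.inl (Set.mem_insert _ _)) (Or.inl (hv_mem _))⟩
    refine Or.inr ⟨some v, hv_mem _, (subdivide_adj_none_some G).2 (Or.inr rfl), ?_⟩
    rwa [sdeg_subdivide_none G huv.ne, sdeg_subdivide_some G huv]
  · refine ⟨none, isStrongDominatingSet_subdivide_of_superset huv hD (Set.subset_insert _ _)
      (Or.inl (Set.mem_insert _ _)) ?_ (Or.inl (hv_mem _))⟩
    refine Or.inr ⟨none, Set.mem_insert _ _, (subdivide_adj_some_none G).2 (Or.inl rfl), ?_⟩
    rw [sdeg_subdivide_none G huv.ne, sdeg_subdivide_some G huv]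
    omega

theorem exists_insert_isStrongDominatingSet_subdivide (huv : G.Adj u v)
    (hD : IsStrongDominatingSet G D) :
    ∃ w, IsStrongDominatingSet (subdivide G u v) (insert w (some '' D)) := by
  by_cases hu : StrongDominates (subdivide G u v) (some '' D) (some u)
  · by_cases hv : StrongDominates (subdivide G u v) (some '' D) (some v)
    · exact ⟨none, isStrongDominatingSet_subdivide_of_superset huv hD (Set.subset_insert _ _)
        (Or.inl (Set.mem_insert _ _)) (hu.mono (Set.subset_insert _ _))
        (hv.mono (Set.subset_insert _ _))⟩
    · rw [subdivide_comm] at hv ⊢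
      exact exists_insert_isStrongDominatingSet_subdivide_of_not_strongDominates huv.symm hD hv
  · exact exists_insert_isStrongDominatingSet_subdivide_of_not_strongDominates huv hD hu

end Subdivide

/-- Edge subdivision: `γst(G) ≤ γst(G_e) ≤ γst(G) + 1`. -/
theorem strongDominationNumber_subdivide_bounds {V : Type*} [Fintype V]
    (G : SimpleGraph V) (u v : V) (huv : G.Adj u v) :
    strongDominationNumber G ≤ strongDominationNumber (subdivide G u v) ∧
    strongDominationNumber (subdivide G u v) ≤ strongDominationNumber G + 1 := by
  constructor
  · simpa using strongDominationNumber_le_add_of_forall_exists (k := 0) fun D' hD' => by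
      simpa using exists_isStrongDominatingSet_of_subdivide G huv hD'
  · refine strongDominationNumber_le_add_of_forall_exists fun D hD => ?_
    obtain ⟨w, hw⟩ := exists_insert_isStrongDominatingSet_subdivide huv hD
    refine ⟨_, hw, ?_⟩
    calc (insert w (some '' D)).ncard ≤ (some '' D).ncard + 1 := Set.ncard_insert_le _ _
      _ = D.ncard + 1 := by rw [Set.ncard_image_of_injective _ (Option.some_injective V)]
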